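/- If α and β are complex roots of P₃(T) = T⁸ − T⁷ + 2T⁶ − 4T⁵ − 2T⁴ − 12T³ + 18T² − 27T + 81 and α/β is a root of unity (i.e., (α/β)^n = 1 for some positive integer n), then α = β. (Equivalently, the tensor square of the L-polynomial has no nontrivial cyclotomic factors; this certifies that the corresponding ordinary simple abelian fourfold is geometrically simple.) -/

import Mathlib

/-!
Let `ζ = α / β`. For `ℓ = 883` and `ℓ = 2459`, `P₃` splits into linear factors over `𝔽_ℓ`, so
reducing modulo a maximal ideal above `ℓ` of the ring of algebraic integers sends `α` and `β`,
hence `ζ`, into `𝔽_ℓ^×`, where `x ^ (ℓ - 1) = 1`. A root of unity that reduces to `1` modulo a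
prime above `ℓ` has `ℓ`-power order, so `ζ ^ (882 * 883 ^ a) = 1 = ζ ^ (2458 * 2459 ^ b)` and
therefore `ζ ^ 2 = 1`. Finally `ζ = -1` is impossible because `P₃(x)` and `P₃(-x)` are coprime.
-/

open Polynomial

/-- The Weil polynomial of the Jacobian of `y² = x⁹ + x⁸ + x⁷ + 2x⁵ + x` over `𝔽₃`. -/
noncomputable def P3 : Polynomial ℂ :=
  X ^ 8 - X ^ 7 + 2 * X ^ 6 - 4 * X ^ 5 - 2 * X ^ 4 - 12 * X ^ 3 + 18 * X ^ 2 - 27 * X + 81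

universe u

theorem IsPrimitiveRoot.natCast_eq_zero_of_map_eq_one {A F : Type*} [CommRing A] [IsDomain A]
    [Semiring F] {ζ : A} {k : ℕ} (hζ : IsPrimitiveRoot ζ k) (hk : 1 < k) (π : A →+* F)
    (h : π ζ = 1) : (k : F) = 0 := by
  simpa [h] using congrArg π (hζ.geom_sum_eq_zero hk)

theorem exists_pow_char_pow_eq_one_of_map_eq_one {A F : Type*} [CommRing A] [IsDomain A]
    [Semiring F] [Nontrivial F] (ℓ : ℕ) [CharP F ℓ] (π : A →+* F) {θ : A}
    (hθ : IsOfFinOrder θ) (h : π θ = 1) : ∃ c, θ ^ ℓ ^ c = 1 := by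
  obtain ⟨e, m, hℓm, hk⟩ :=
    Nat.exists_eq_pow_mul_and_not_dvd hθ.orderOf_pos.ne' ℓ (CharP.char_ne_one F ℓ)
  have hη : IsPrimitiveRoot (θ ^ ℓ ^ e) m := (IsPrimitiveRoot.orderOf θ).pow hθ.orderOf_pos hk
  refine ⟨e, ?_⟩
  have hm0 : m ≠ 0 := by rintro rfl; exact hθ.orderOf_pos.ne' (by simpa using hk)
  by_cases hm : m = 1
  · simpa [hm] using hη.pow_eq_one
  · have hmF : (m : F) = 0 :=
      hη.natCast_eq_zero_of_map_eq_one (by omega) π (by rw [map_pow, h, one_pow])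
    exact absurd ((CharP.cast_eq_zero_iff F ℓ m).mp hmF) hℓm

theorem Ideal.exists_isMaximal_natCast_mem {S : Type*} [CommRing S] [Algebra.IsIntegral ℤ S]
    [CharZero S] {ℓ : ℕ} (hℓ : ℓ.Prime) : ∃ Q : Ideal S, Q.IsMaximal ∧ (ℓ : S) ∈ Q := by
  have : (Ideal.span {(ℓ : ℤ)}).IsMaximal :=
    PrincipalIdealRing.isMaximal_of_irreducible (Nat.prime_iff_prime_int.mp hℓ).irreducible
  obtain ⟨Q, hQ, hQℓ⟩ := Ideal.exists_ideal_over_maximal_of_isIntegral (S := S)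
    (Ideal.span {(ℓ : ℤ)})
    (by rw [(RingHom.injective_iff_ker_eq_bot _).mp Int.cast_injective]; exact bot_le)
  refine ⟨Q, hQ, ?_⟩
  have : (ℓ : ℤ) ∈ Q.comap (algebraMap ℤ S) := hQℓ ▸ Ideal.mem_span_singleton_self _
  simpa using this

theorem exists_pow_mul_char_pow_eq_one {K : Type u} [Field K] [CharZero K] {f : ℤ[X]}
    (hf : f.Monic) {ℓ D : ℕ} (hℓ : ℓ.Prime)
    (hroots : ∀ (F : Type u) [Field F] [CharP F ℓ] (x : F), aeval x f = 0 → x ^ D = 1)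
    {α β ζ : K} (hα : aeval α f = 0) (hβ : aeval β f = 0) (hζ : IsOfFinOrder ζ)
    (hαβ : α = ζ * β) : ∃ c, ζ ^ (D * ℓ ^ c) = 1 := by
  set A := integralClosure ℤ K
  have hval : Function.Injective A.val := Subtype.val_injective
  let a : A := ⟨α, f, hf, by rwa [← aeval_def]⟩
  let b : A := ⟨β, f, hf, by rwa [← aeval_def]⟩
  let z : A := ⟨ζ, (IsPrimitiveRoot.orderOf ζ).isIntegral hζ.orderOf_pos⟩
  obtain ⟨Q, hQ, hℓQ⟩ := Ideal.exists_isMaximal_natCast_mem (S := A) hℓ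
  let := Ideal.Quotient.field Q
  have : CharP (A ⧸ Q) ℓ := (CharP.charP_iff_prime_eq_zero hℓ).mpr <| by
    simpa using Ideal.Quotient.eq_zero_iff_mem.mpr hℓQ
  let π := Ideal.Quotient.mkₐ ℤ Q
  have hreduce : ∀ y : A, aeval (y : K) f = 0 → π y ^ D = 1 := fun y hy =>
    hroots _ _ <| by
      rw [aeval_algHom_apply,
        show aeval y f = 0 from hval (by rw [A.val_apply, aeval_subalgebra_coe]; exact hy),
        map_zero]
  have hz : π z ^ D = 1 := by
    have hab : a = z * b := Subtype.ext hαβ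
    calc π z ^ D = π z ^ D * π b ^ D := by rw [hreduce b hβ, mul_one]
      _ = 1 := by rw [← mul_pow, ← map_mul, ← hab, hreduce a hα]
  obtain ⟨c, hc⟩ := exists_pow_char_pow_eq_one_of_map_eq_one ℓ (π : A →+* A ⧸ Q)
    ((hval.isOfFinOrder_iff (f := A.val.toMonoidHom) (x := z)).mp hζ).pow (by simpa using hz)
  exact ⟨c, by simpa [pow_mul] using congrArg A.val hc⟩

theorem pow_sub_one_eq_one_of_prod_eq_zero {F : Type*} [Field F] {ℓ : ℕ} [Fact ℓ.Prime]
    [CharP F ℓ] {cs : List ℕ} (hcs : ∀ c ∈ cs, ¬ℓ ∣ c) {x : F}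
    (hx : (cs.map fun c : ℕ => x - c).prod = 0) : x ^ (ℓ - 1) = 1 := by
  obtain ⟨c, hc, hxc⟩ : ∃ c ∈ cs, x - c = 0 := by simpa using hx
  have hc0 : (c : ZMod ℓ) ≠ 0 := by rw [ne_eq, ZMod.natCast_eq_zero_iff]; exact hcs c hc
  simpa [sub_eq_zero.mp hxc] using
    congrArg (ZMod.castHom dvd_rfl F) (ZMod.pow_card_sub_one_eq_one hc0)

noncomputable def P3Int : ℤ[X] :=
  X ^ 8 - X ^ 7 + 2 * X ^ 6 - 4 * X ^ 5 - 2 * X ^ 4 - 12 * X ^ 3 + 18 * X ^ 2 - 27 * X + 81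

theorem P3Int_monic : P3Int.Monic := by
  unfold P3Int
  monicity!

theorem aeval_P3Int {R : Type*} [CommRing R] (x : R) :
    aeval x P3Int =
      x ^ 8 - x ^ 7 + 2 * x ^ 6 - 4 * x ^ 5 - 2 * x ^ 4 - 12 * x ^ 3 + 18 * x ^ 2 - 27 * x + 81 := by
  simp [P3Int, map_ofNat]

theorem eval_P3 (x : ℂ) : P3.eval x = aeval x P3Int := by
  simp [P3, aeval_P3Int]

theorem pow_882_eq_one_of_aeval_P3Int_eq_zero {F : Type*} [Field F] [CharP F 883] {x : F}
    (hx : aeval x P3Int = 0) : x ^ 882 = 1 := by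
  have : Fact (Nat.Prime 883) := ⟨by norm_num⟩
  refine pow_sub_one_eq_one_of_prod_eq_zero (ℓ := 883)
    (cs := [67, 354, 536, 579, 659, 666, 700, 855]) (by decide) ?_
  rw [aeval_P3Int] at hx
  simp only [List.map_cons, List.map_nil, List.prod_cons, List.prod_nil, Nat.cast_ofNat, mul_one]
  linear_combination (norm := (ring_nf; reduce_mod_char!)) hx

theorem pow_2458_eq_one_of_aeval_P3Int_eq_zero {F : Type*} [Field F] [CharP F 2459] {x : F}
    (hx : aeval x P3Int = 0) : x ^ 2458 = 1 := by
  have : Fact (Nat.Prime 2459) := ⟨by norm_num⟩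
  refine pow_sub_one_eq_one_of_prod_eq_zero (ℓ := 2459)
    (cs := [698, 809, 845, 969, 1152, 1561, 1580, 2223]) (by decide) ?_
  rw [aeval_P3Int] at hx
  simp only [List.map_cons, List.map_nil, List.prod_cons, List.prod_nil, Nat.cast_ofNat, mul_one]
  linear_combination (norm := (ring_nf; reduce_mod_char!)) hx

theorem aeval_P3Int_neg_ne_zero {K : Type*} [Field K] [CharZero K] {x : K}
    (hx : aeval x P3Int = 0) : aeval (-x) P3Int ≠ 0 := by
  intro hnx
  rw [aeval_P3Int] at hx hnx
  -- a Bézout relation between `P₃(x)` and `P₃(-x)` over `ℤ`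
  have : (367416 : K) = 0 := by
    linear_combination
      (2268 + 711 * x - 267 * x ^ 2 - 299 * x ^ 3 + 121 * x ^ 4 + 191 * x ^ 5 - 35 * x ^ 6
        - 35 * x ^ 7) * hx +
      (2268 - 711 * x - 267 * x ^ 2 + 299 * x ^ 3 + 121 * x ^ 4 - 191 * x ^ 5 - 35 * x ^ 6
        + 35 * x ^ 7) * hnx
  norm_num at this

theorem gcd_882_mul_883_pow_2458_mul_2459_pow (a b : ℕ) :
    Nat.gcd (882 * 883 ^ a) (2458 * 2459 ^ b) = 2 := by
  rw [Nat.Coprime.gcd_mul_right_cancel_right _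
      ((Nat.Coprime.mul_right (by norm_num) ((Nat.Coprime.pow_right a (by norm_num)))).pow_left b),
    Nat.Coprime.gcd_mul_right_cancel _ ((Nat.Coprime.pow_left a (by norm_num)))]
  norm_num

/-- If `α` and `β` are complex roots of `P₃` whose ratio is a root of unity, then `α = β`. -/
theorem P3_no_root_of_unity_ratio (α β : ℂ) (hα : P3.eval α = 0) (hβ : P3.eval β = 0)
    (h : ∃ n : ℕ, 0 < n ∧ (α / β) ^ n = 1) : α = β := by
  obtain ⟨n, hn, hpow⟩ := h
  rw [eval_P3] at hα hβ
  have hζ : IsOfFinOrder (α / β) := isOfFinOrder_iff_pow_eq_one.mpr ⟨n, hn, hpow⟩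
  have hβ0 : β ≠ 0 := by rintro rfl; simp [hn.ne'] at hpow
  have hαβ : α = α / β * β := (div_mul_cancel₀ α hβ0).symm
  obtain ⟨c₁, h₁⟩ := exists_pow_mul_char_pow_eq_one P3Int_monic (ℓ := 883) (by norm_num)
    (fun _ _ _ _ => pow_882_eq_one_of_aeval_P3Int_eq_zero) hα hβ hζ hαβ
  obtain ⟨c₂, h₂⟩ := exists_pow_mul_char_pow_eq_one P3Int_monic (ℓ := 2459) (by norm_num)
    (fun _ _ _ _ => pow_2458_eq_one_of_aeval_P3Int_eq_zero) hα hβ hζ hαβ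
  have hζ2 : (α / β) ^ 2 = 1 := by
    rw [← gcd_882_mul_883_pow_2458_mul_2459_pow c₁ c₂]
    exact pow_gcd_eq_one.mpr ⟨h₁, h₂⟩
  rcases sq_eq_one_iff.mp hζ2 with h1 | hneg
  · rwa [h1, one_mul] at hαβ
  · rw [hαβ, hneg, neg_one_mul] at hα
    exact absurd hα (aeval_P3Int_neg_ne_zero hβ)
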